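/- arXiv:2504.04542 — 7 statements merged into one kernel-verified Lean document; each statement's English description precedes it below -/
import Mathlib

section
/- Let V be a finite type equipped with a relation E and an injective function rank : V → ℕ such that E u v implies rank u < rank v. For a finite set S of vertices write L(S) = ∑_{v ∈ S} 2^(rank v). If S is a finite set of vertices, S' is a nonempty subset of S, and S'' is a finite set of vertices contained in (S \ S') ∪ {u : ∃ v ∈ S', E u v}, then L(S'') < L(S). -/
lemma aux_sum_two_pow (n : ℕ) : ∑ i ∈ Finset.range n, 2 ^ i < 2 ^ n := by
  induction n with
  | zero => simp
  | succ n ih => rw [Finset.sum_range_succ, pow_succ]; omega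

theorem stmt0 {V : Type*} [Fintype V] [DecidableEq V]
    (E : V → V → Prop) (rank : V → ℕ)
    (hrank : Function.Injective rank)
    (hE : ∀ u v, E u v → rank u < rank v)
    (S S' S'' : Finset V) (hS'sub : S' ⊆ S) (hS'ne : S'.Nonempty)
    (hS'' : ∀ w ∈ S'', w ∈ S \ S' ∨ ∃ v ∈ S', E w v) :
    ∑ v ∈ S'', 2 ^ rank v < ∑ v ∈ S, 2 ^ rank v := by
  obtain ⟨v₀, hv₀S, hv₀max⟩ := S'.exists_max_image rank hS'ne
  set M := rank v₀ with hM
  set T : Finset V := Finset.univ.filter (fun w => rank w < M) with hT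
  have hsub : S'' ⊆ (S \ S') ∪ T := by
    intro w hw
    rcases hS'' w hw with h | ⟨v, hv, hEv⟩
    · exact Finset.mem_union_left _ h
    · exact Finset.mem_union_right _ (by
        simp only [hT, Finset.mem_filter, Finset.mem_univ, true_and]
        exact lt_of_lt_of_le (hE _ _ hEv) (hv₀max v hv))
  have h1 : ∑ v ∈ S'', 2 ^ rank v ≤ ∑ v ∈ (S \ S') ∪ T, 2 ^ rank v :=
    Finset.sum_le_sum_of_subset hsub
  have h2 : ∑ v ∈ (S \ S') ∪ T, 2 ^ rank v ≤
      ∑ v ∈ S \ S', 2 ^ rank v + ∑ v ∈ T, 2 ^ rank v := by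
    have := Finset.sum_union_inter (s₁ := S \ S') (s₂ := T) (f := fun v => 2 ^ rank v)
    omega
  have hTsum : ∑ v ∈ T, 2 ^ rank v < 2 ^ M := by
    have himg : ∑ v ∈ T, 2 ^ rank v = ∑ k ∈ T.image rank, 2 ^ k :=
      (Finset.sum_image (fun x _ y _ h => hrank h)).symm
    have hsub2 : T.image rank ⊆ Finset.range M := by
      intro k hk
      simp only [Finset.mem_image, hT, Finset.mem_filter] at hk
      obtain ⟨w, ⟨_, hw⟩, rfl⟩ := hk
      exact Finset.mem_range.mpr hw
    calc ∑ v ∈ T, 2 ^ rank v = ∑ k ∈ T.image rank, 2 ^ k := himg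
      _ ≤ ∑ k ∈ Finset.range M, 2 ^ k := Finset.sum_le_sum_of_subset hsub2
      _ < 2 ^ M := aux_sum_two_pow M
  have hS' : 2 ^ M ≤ ∑ v ∈ S', 2 ^ rank v :=
    Finset.single_le_sum (f := fun v => 2 ^ rank v) (fun v _ => Nat.zero_le _) hv₀S
  have hsum : ∑ v ∈ S \ S', 2 ^ rank v + ∑ v ∈ S', 2 ^ rank v = ∑ v ∈ S, 2 ^ rank v :=
    Finset.sum_sdiff hS'sub
  omega
end

section
/- Let l, u, x : ℝ with l ≤ x ≤ u. Then: (i) if 0 < l, then max x 0 = x (so l ≤ max x 0 ≤ u and x ≤ max x 0 ≤ x); (ii) if u < 0, then max x 0 = 0; (iii) if l ≤ 0, 0 ≤ u, and l < u, then 0 ≤ max x 0, max x 0 ≤ u, and max x 0 ≤ (u * x − u * l) / (u − l). -/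
theorem stmt4 (l u x : ℝ) (hl : l ≤ x) (hu : x ≤ u) :
    (0 < l → max x 0 = x) ∧
    (u < 0 → max x 0 = 0) ∧
    (l ≤ 0 → 0 ≤ u → l < u →
      0 ≤ max x 0 ∧ max x 0 ≤ u ∧ max x 0 ≤ (u * x - u * l) / (u - l)) := by
  refine ⟨fun h => max_eq_left (by linarith), fun h => max_eq_right (by linarith),
    fun h0 h1 h2 => ⟨le_max_right _ _, max_le hu h1, ?_⟩⟩
  rw [le_div_iff₀ (by linarith)]
  rcases le_or_gt x 0 with hx | hx
  · rw [max_eq_right hx]; nlinarith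
  · rw [max_eq_left hx.le]; nlinarith
end

section
/- Let l, u, x : ℝ with l ≤ x ≤ u. Then: (i) if 0 ≤ l, then |x| = x; (ii) if u ≤ 0, then |x| = −x; (iii) if l < 0 and 0 < u, then 0 ≤ |x|, |x| ≤ max u (−l), x ≤ |x|, and |x| ≤ (x * (u + l) − 2 * u * l) / (u − l). -/
theorem stmt6 (l u x : ℝ) (hl : l ≤ x) (hu : x ≤ u) :
    (0 ≤ l → |x| = x) ∧
    (u ≤ 0 → |x| = -x) ∧
    (l < 0 → 0 < u →
      0 ≤ |x| ∧ |x| ≤ max u (-l) ∧ x ≤ |x| ∧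
      |x| ≤ (x * (u + l) - 2 * u * l) / (u - l)) := by
  refine ⟨fun h => abs_of_nonneg (le_trans h hl),
          fun h => abs_of_nonpos (le_trans hu h),
          fun hl0 hu0 => ⟨abs_nonneg x, ?_, le_abs_self x, ?_⟩⟩
  · rcases abs_cases x with ⟨h, _⟩ | ⟨h, _⟩
    · rw [h]; exact le_max_of_le_left hu
    · rw [h]; exact le_max_of_le_right (neg_le_neg hl)
  · rw [le_div_iff₀ (by linarith)]
    rcases abs_cases x with ⟨h, hx⟩ | ⟨h, hx⟩ <;> rw [h] <;> nlinarith
end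

section
/- Define hswish : ℝ → ℝ (the HardSwish activation) by hswish(x) = 0 if x ≤ -3, hswish(x) = x if x ≥ 3, and hswish(x) = x*(x+3)/6 if -3 < x < 3. Let u, x : ℝ with 3 ≤ u and −3 ≤ x ≤ u. Then hswish(x) ≤ u * (x + 3) / (u + 3). -/
noncomputable def hswish (x : ℝ) : ℝ :=
  if x ≤ -3 then 0 else if x ≥ 3 then x else x * (x + 3) / 6

theorem stmt10 (u x : ℝ) (hu : 3 ≤ u) (hx : -3 ≤ x) (hxu : x ≤ u) :
    hswish x ≤ u * (x + 3) / (u + 3) := by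
  have hu3 : (0:ℝ) < u + 3 := by linarith
  unfold hswish
  split_ifs with h1 h2
  · have : x = -3 := le_antisymm h1 hx
    subst this
    norm_num
  · rw [le_div_iff₀ hu3]; nlinarith
  · rw [div_le_div_iff₀ (by norm_num) hu3]
    nlinarith [mul_pos (by linarith : (0:ℝ) < x + 3) (by linarith : (0:ℝ) < 3 - x)]
end

section
/- Let l, u, x : ℝ with l ≤ x ≤ u, l < 0, and 0 < u. Then there exists ε : ℝ with −1 ≤ ε ≤ 1 such that max x 0 = u/2 + (u/2) * ε. -/
theorem stmt13 (l u x : ℝ) (hlx : l ≤ x) (hxu : x ≤ u) (hl : l < 0) (hu : 0 < u) :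
    ∃ ε : ℝ, -1 ≤ ε ∧ ε ≤ 1 ∧ max x 0 = u / 2 + (u / 2) * ε := by
  refine ⟨2 * max x 0 / u - 1, ?_, ?_, ?_⟩
  · have h0 : 0 ≤ max x 0 := le_max_right _ _
    have : 0 ≤ 2 * max x 0 / u := by positivity
    linarith
  · have h1 : max x 0 ≤ u := max_le hxu hu.le
    have : 2 * max x 0 / u ≤ 2 := by
      rw [div_le_iff₀ hu]; linarith
    linarith
  · field_simp
    ring
end

section
/- Let x, l', u', l, u : ℝ with l' ≤ x ≤ u', and set y = max x 0; assume l ≤ y ≤ u. Then: (i) if 0 < l', then max l' l ≤ y ≤ min u' u; (ii) if 0 ≤ u', then y ≤ min u' u. -/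
theorem stmt15 (x l' u' l u : ℝ) (h1 : l' ≤ x) (h2 : x ≤ u')
    (hl : l ≤ max x 0) (hu : max x 0 ≤ u) :
    (0 < l' → max l' l ≤ max x 0 ∧ max x 0 ≤ min u' u) ∧
    (0 ≤ u' → max x 0 ≤ min u' u) := by
  refine ⟨fun h => ⟨max_le (h1.trans (le_max_left _ _)) hl,
    le_min (max_le h2 (((h.trans_le h1).le.trans h2))) hu⟩,
    fun h => le_min (max_le h2 h) hu⟩
end

section
/- Define hswish : ℝ → ℝ (the HardSwish activation) by hswish(x) = 0 if x ≤ -3, hswish(x) = x if x ≥ 3, and hswish(x) = x*(x+3)/6 if -3 < x < 3. Define f₁ : ℝ → ℝ by f₁(u) = u*(u+3)/6 if u < 3 and f₁(u) = u otherwise. Let l, u, x : ℝ with l < −3, 0 ≤ u, and l ≤ x ≤ u. Then hswish(x) ≤ f₁(u) * (x − l). -/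
noncomputable def f₁ (u : ℝ) : ℝ :=
  if u < 3 then u * (u + 3) / 6 else u

theorem stmt17 (l u x : ℝ) (hl : l < -3) (hu : 0 ≤ u) (hlx : l ≤ x) (hxu : x ≤ u) :
    hswish x ≤ f₁ u * (x - l) := by
  unfold hswish f₁
  split_ifs with h1 h2 h3 h4 h5 <;> nlinarith [sq_nonneg (x - u), sq_nonneg (x + 3), sq_nonneg (u - 3), mul_nonneg hu (sub_nonneg.2 hlx), sq_nonneg x, sq_nonneg u]
end
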